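/- arXiv:1912.00480 — 10 statements merged into one kernel-verified Lean document; each statement's English description precedes it below -/
import Mathlib

section
/- Let M be a 4-dimensional space-time. Then (∇_μ∇_ν − ∇_ν∇_μ) W*_{jk} = (4/3)(∇_μ∇_ν − ∇_ν∇_μ) R_{jk}, where W*_{jk} = g^{il}W*_{ijkl}. Consequently, the tensor W*_{jk} is semi-symmetric (annihilated by the curvature operator acting as a derivation) if and only if M is Ricci semi-symmetric. -/
/-- On a 4-dimensional space-time,
`(∇_μ∇_ν − ∇_ν∇_μ) W*_{jk} = (4/3)(∇_μ∇_ν − ∇_ν∇_μ) R_{jk}`; consequently the trace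
tensor `W*_{jk}` is semi-symmetric iff the space-time is Ricci semi-symmetric.
Here `CR4`, `CRic`, `CW4`, `CW2` denote the curvature-commutator
`(∇_μ∇_ν − ∇_ν∇_μ)` applied to the Riemann tensor, the Ricci tensor, the
W*-tensor, and its trace `W*_{jk} = g^{il}W*_{ijkl}`, respectively. -/
theorem wstar_trace_semisymmetric_iff_ricci_semisymmetric
    (g ginv : Fin 4 → Fin 4 → ℝ)
    (CR4 CW4 : Fin 4 → Fin 4 → Fin 4 → Fin 4 → Fin 4 → Fin 4 → ℝ)
    (CRic CW2 : Fin 4 → Fin 4 → Fin 4 → Fin 4 → ℝ)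
    (hgsymm : ∀ i j, g i j = g j i)
    (hginvsymm : ∀ i j, ginv i j = ginv j i)
    (hginv : ∀ i j, ∑ t, ginv i t * g t j = if i = j then (1:ℝ) else 0)
    -- the commutator applied to the definition of W* (the metric is parallel)
    (hCW4 : ∀ μ ν i j k l, CW4 μ ν i j k l =
      CR4 μ ν i j k l - (1/3 : ℝ) * (g j k * CRic μ ν i l - g j l * CRic μ ν i k))
    -- the commutator commutes with contraction: trace of the Riemann commutator
    (htrace : ∀ μ ν j k, ∑ i, ∑ l, ginv i l * CR4 μ ν i j k l = CRic μ ν j k)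
    (hCW2 : ∀ μ ν j k, CW2 μ ν j k = ∑ i, ∑ l, ginv i l * CW4 μ ν i j k l)
    -- the commutator annihilates the scalar curvature
    (hscal : ∀ μ ν, ∑ i, ∑ l, ginv i l * CRic μ ν i l = 0) :
    (∀ μ ν j k, CW2 μ ν j k = (4/3 : ℝ) * CRic μ ν j k) ∧
    ((∀ μ ν j k, CW2 μ ν j k = 0) ↔ (∀ μ ν j k, CRic μ ν j k = 0)) := by
  have main : ∀ μ ν j k, CW2 μ ν j k = (4/3 : ℝ) * CRic μ ν j k := by
    intro μ ν j k
    have hdelta : ∑ i, ∑ l, ginv i l * (g j l * CRic μ ν i k) = CRic μ ν j k := by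
      have h1 : ∀ i : Fin 4, ∑ l, ginv i l * (g j l * CRic μ ν i k)
          = (if i = j then (1:ℝ) else 0) * CRic μ ν i k := by
        intro i
        rw [← hginv i j, Finset.sum_mul]
        apply Finset.sum_congr rfl
        intro l _
        rw [hgsymm j l]; ring
      simp only [h1]
      simp [Finset.sum_ite_eq', Finset.mem_univ]
    calc CW2 μ ν j k
        = ∑ i, ∑ l, ginv i l * CW4 μ ν i j k l := hCW2 μ ν j k
      _ = ∑ i, ∑ l, (ginv i l * CR4 μ ν i j k l
            - (1/3 : ℝ) * (g j k * (ginv i l * CRic μ ν i l))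
            + (1/3 : ℝ) * (ginv i l * (g j l * CRic μ ν i k))) := by
          apply Finset.sum_congr rfl; intro i _
          apply Finset.sum_congr rfl; intro l _
          rw [hCW4]; ring
      _ = (∑ i, ∑ l, ginv i l * CR4 μ ν i j k l)
            - (1/3 : ℝ) * (g j k * (∑ i, ∑ l, ginv i l * CRic μ ν i l))
            + (1/3 : ℝ) * (∑ i, ∑ l, ginv i l * (g j l * CRic μ ν i k)) := by
          simp [Finset.sum_add_distrib, Finset.sum_sub_distrib, Finset.mul_sum]
      _ = CRic μ ν j k - (1/3 : ℝ) * (g j k * 0) + (1/3 : ℝ) * CRic μ ν j k := by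
          rw [htrace, hscal, hdelta]
      _ = (4/3 : ℝ) * CRic μ ν j k := by ring
  refine ⟨main, ?_, ?_⟩
  · intro h μ ν j k
    have := main μ ν j k
    rw [h] at this
    linarith
  · intro h μ ν j k
    rw [main, h]; ring
end

section
/- If a 4-dimensional space-time is W*-symmetric, i.e., ∇_m W*_{ijkl} = 0, then ∇_m R_{jk} = (1/4) g_{jk} ∇_m R. Consequently, if additionally the scalar curvature is constant, the Ricci tensor is parallel. -/
/-- If a 4-dimensional space-time is W*-symmetric (`∇_m W*_{ijkl} = 0`),
then `∇_m R_{jk} = (1/4) g_{jk} ∇_m R`; consequently, if the scalar curvature is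
constant the Ricci tensor is parallel.
`DW m i j k l = ∇_m W*_{ijkl}`, `DRiem m i j k l = ∇_m R_{ijkl}`,
`DRic m i j = ∇_m R_{ij}`, `DScal m = ∇_m R`; `hDW` is the covariant derivative of
the defining formula of W* (the metric being parallel), and the trace hypotheses
express that contraction commutes with covariant differentiation. -/
theorem wstar_symmetric_ricci
    (g ginv : Fin 4 → Fin 4 → ℝ)
    (DRiem DW : Fin 4 → Fin 4 → Fin 4 → Fin 4 → Fin 4 → ℝ)
    (DRic : Fin 4 → Fin 4 → Fin 4 → ℝ)
    (DScal : Fin 4 → ℝ)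
    (hgsymm : ∀ i j, g i j = g j i)
    (hginvsymm : ∀ i j, ginv i j = ginv j i)
    (hginv : ∀ i j, ∑ t, ginv i t * g t j = if i = j then (1:ℝ) else 0)
    (hDW : ∀ m i j k l, DW m i j k l = DRiem m i j k l -
      (1/3 : ℝ) * (g j k * DRic m i l - g j l * DRic m i k))
    (htraceDRiem : ∀ m j k, ∑ i, ∑ l, ginv i l * DRiem m i j k l = DRic m j k)
    (htraceDRic : ∀ m, ∑ i, ∑ l, ginv i l * DRic m i l = DScal m)
    (hWsym : ∀ m i j k l, DW m i j k l = 0) :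
    (∀ m j k, DRic m j k = (1/4 : ℝ) * g j k * DScal m) ∧
    ((∀ m, DScal m = 0) → ∀ m j k, DRic m j k = 0) := by
  have hR : ∀ m i j k l, DRiem m i j k l =
      (1/3 : ℝ) * (g j k * DRic m i l - g j l * DRic m i k) := by
    intro m i j k l
    have := hDW m i j k l
    rw [hWsym] at this
    linarith
  have hdelta : ∀ i j, ∑ l, ginv i l * g j l = if i = j then (1:ℝ) else 0 := by
    intro i j
    simp_rw [hgsymm j]
    exact hginv i j
  have key : ∀ m j k, DRic m j k = (1/4 : ℝ) * g j k * DScal m := by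
    intro m j k
    have h1 : DRic m j k =
        (1/3 : ℝ) * (g j k * DScal m - DRic m j k) := by
      have e1 : ∑ i, ∑ l, ginv i l * DRiem m i j k l =
          (1/3 : ℝ) * (g j k * (∑ i, ∑ l, ginv i l * DRic m i l))
            - (1/3 : ℝ) * (∑ i, (∑ l, ginv i l * g j l) * DRic m i k) := by
        calc ∑ i, ∑ l, ginv i l * DRiem m i j k l
            = ∑ i, ∑ l, ((1/3 : ℝ) * (g j k * (ginv i l * DRic m i l)) -
                (1/3 : ℝ) * (ginv i l * g j l * DRic m i k)) := by
              refine Finset.sum_congr rfl fun i _ => Finset.sum_congr rfl fun l _ => ?_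
              rw [hR]; ring
          _ = _ := by
              simp only [Finset.sum_sub_distrib, Finset.sum_mul, ← Finset.mul_sum]
      rw [htraceDRiem] at e1
      rw [htraceDRic] at e1
      simp_rw [hdelta, ite_mul, one_mul, zero_mul] at e1
      rw [Finset.sum_ite_eq' Finset.univ j (fun i => DRic m i k)] at e1
      simp only [Finset.mem_univ, if_true] at e1
      linarith [e1]
    linarith
  exact ⟨key, fun h0 m j k => by rw [key m j k, h0 m, mul_zero]⟩
end

section
/- Let M be a 4-dimensional space-time. The Ricci tensor is a Codazzi tensor (∇_m R_{il} = ∇_l R_{im}) if and only if the W*-curvature tensor satisfies the cyclic identity ∇_m W*_{ijkl} + ∇_k W*_{ijlm} + ∇_l W*_{ijmk} = 0. -/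
private lemma contract1 (g ginv : Fin 4 → Fin 4 → ℝ)
    (hginv : ∀ i j, ∑ t, ginv i t * g t j = if i = j then (1:ℝ) else 0)
    (F : Fin 4 → ℝ) (j : Fin 4) :
    ∑ i, ∑ k, ginv i k * g k j * F i = F j := by
  have h1 : ∀ i, ∑ k, ginv i k * g k j * F i = (if i = j then (1:ℝ) else 0) * F i := by
    intro i
    rw [← Finset.sum_mul, hginv]
  simp only [h1, ite_mul, one_mul, zero_mul]
  simp

private lemma contract2 (g ginv : Fin 4 → Fin 4 → ℝ)
    (hginvsymm : ∀ i j, ginv i j = ginv j i)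
    (hginv : ∀ i j, ∑ t, ginv i t * g t j = if i = j then (1:ℝ) else 0)
    (F : Fin 4 → ℝ) (j : Fin 4) :
    ∑ i, ∑ k, ginv i k * g i j * F k = F j := by
  rw [Finset.sum_comm]
  have h1 : ∀ k i, ginv i k * g i j * F k = ginv k i * g i j * F k := by
    intro k i; rw [hginvsymm]
  calc ∑ k, ∑ i, ginv i k * g i j * F k
      = ∑ k, ∑ i, ginv k i * g i j * F k :=
        Finset.sum_congr rfl fun k _ => Finset.sum_congr rfl fun i _ => h1 k i
    _ = F j := contract1 g ginv hginv F j

private lemma contract_trace (g ginv : Fin 4 → Fin 4 → ℝ)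
    (hgsymm : ∀ i j, g i j = g j i)
    (hginv : ∀ i j, ∑ t, ginv i t * g t j = if i = j then (1:ℝ) else 0) :
    ∑ i : Fin 4, ∑ k, ginv i k * g i k = 4 := by
  have h1 : ∀ i : Fin 4, ∑ k, ginv i k * g i k = 1 := by
    intro i
    calc ∑ k, ginv i k * g i k = ∑ k, ginv i k * g k i :=
          Finset.sum_congr rfl fun k _ => by rw [hgsymm i k]
      _ = if i = i then (1:ℝ) else 0 := hginv i i
      _ = 1 := by simp
  simp [h1]

/-- On a 4-dimensional space-time, the Ricci tensor is a Codazzi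
tensor (`∇_m R_{il} = ∇_l R_{im}`) iff the W*-curvature tensor satisfies the
cyclic identity `∇_m W*_{ijkl} + ∇_k W*_{ijlm} + ∇_l W*_{ijmk} = 0`.
Notation and hypotheses as in the second-Bianchi identity for W*; `htrace` and
`hdivRic` are the standard contractions `g^{ik}∇_m R_{ik} = ∇_m R` and
`g^{ik}∇_k R_{im} = (1/2)∇_m R`. -/
theorem ricci_codazzi_iff_wstar_cyclic
    (g ginv : Fin 4 → Fin 4 → ℝ)
    (DRiem DW : Fin 4 → Fin 4 → Fin 4 → Fin 4 → Fin 4 → ℝ)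
    (DRic : Fin 4 → Fin 4 → Fin 4 → ℝ)
    (DScal : Fin 4 → ℝ)
    (hgsymm : ∀ i j, g i j = g j i)
    (hginvsymm : ∀ i j, ginv i j = ginv j i)
    (hginv : ∀ i j, ∑ t, ginv i t * g t j = if i = j then (1:ℝ) else 0)
    (hDRicSym : ∀ m i j, DRic m i j = DRic m j i)
    (hDW : ∀ m i j k l, DW m i j k l = DRiem m i j k l -
      (1/3 : ℝ) * (g j k * DRic m i l - g j l * DRic m i k))
    (hBianchi2 : ∀ m i j k l,
      DRiem m i j k l + DRiem k i j l m + DRiem l i j m k = 0)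
    (htrace : ∀ m, ∑ i, ∑ k, ginv i k * DRic m i k = DScal m)
    (hdivRic : ∀ m, ∑ i, ∑ k, ginv i k * DRic k i m = (1/2 : ℝ) * DScal m) :
    (∀ m i l, DRic m i l = DRic l i m) ↔
      (∀ m i j k l, DW m i j k l + DW k i j l m + DW l i j m k = 0) := by
  constructor
  · intro h m i j k l
    rw [hDW m i j k l, hDW k i j l m, hDW l i j m k]
    linear_combination hBianchi2 m i j k l - (1/3 : ℝ) * g j k * (h m i l)
      + (1/3 : ℝ) * g j l * (h m i k) + (1/3 : ℝ) * g j m * (h k i l)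
  · intro h
    -- Step 1: contract the cyclic identity with g^{ik}
    have E : ∀ m j l, DRic m j l - DRic l j m
        - (1/2 : ℝ) * g j l * DScal m + (1/2 : ℝ) * g j m * DScal l = 0 := by
      intro m j l
      have h0 : ∑ i, ∑ k, ginv i k * (DW m i j k l + DW k i j l m + DW l i j m k)
          = 0 := by
        simp [h]
      have pt : ∀ i k, ginv i k * (DW m i j k l + DW k i j l m + DW l i j m k)
          = (-(1/3 : ℝ)) * (ginv i k * g k j * DRic m i l)
            + ((1/3 : ℝ) * g j l) * (ginv i k * DRic m i k)
            + (-(1/3 : ℝ) * g j l) * (ginv i k * DRic k i m)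
            + ((1/3 : ℝ) * g j m) * (ginv i k * DRic k i l)
            + (-(1/3 : ℝ) * g j m) * (ginv i k * DRic l i k)
            + ((1/3 : ℝ)) * (ginv i k * g k j * DRic l i m) := by
        intro i k
        rw [hDW m i j k l, hDW k i j l m, hDW l i j m k, hgsymm k j]
        linear_combination (ginv i k) * hBianchi2 m i j k l
      rw [Finset.sum_congr rfl fun i _ => Finset.sum_congr rfl fun k _ => pt i k]
        at h0
      simp only [Finset.sum_add_distrib, ← Finset.mul_sum] at h0
      rw [contract1 g ginv hginv (fun i => DRic m i l) j,
          contract1 g ginv hginv (fun i => DRic l i m) j,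
          htrace m, hdivRic m, hdivRic l, htrace l] at h0
      linear_combination (-3 : ℝ) * h0
    -- Step 2: contract E with g^{jl} to get ∇R = 0
    have hscal : ∀ m, DScal m = 0 := by
      intro m
      have h1 : ∑ j, ∑ l, ginv j l * (DRic m j l - DRic l j m
          - (1/2 : ℝ) * g j l * DScal m + (1/2 : ℝ) * g j m * DScal l) = 0 := by
        refine Finset.sum_eq_zero fun j _ => Finset.sum_eq_zero fun l _ => ?_
        rw [E m j l, mul_zero]
      have pt : ∀ j l, ginv j l * (DRic m j l - DRic l j m
          - (1/2 : ℝ) * g j l * DScal m + (1/2 : ℝ) * g j m * DScal l)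
          = (1 : ℝ) * (ginv j l * DRic m j l)
            + (-1 : ℝ) * (ginv j l * DRic l j m)
            + (-(1/2 : ℝ) * DScal m) * (ginv j l * g j l)
            + ((1/2 : ℝ)) * (ginv j l * g j m * DScal l) := by
        intro j l; ring
      rw [Finset.sum_congr rfl fun j _ => Finset.sum_congr rfl fun l _ => pt j l]
        at h1
      simp only [Finset.sum_add_distrib, ← Finset.mul_sum] at h1
      rw [htrace m, hdivRic m, contract_trace g ginv hgsymm hginv,
          contract2 g ginv hginvsymm hginv (fun l => DScal l) m] at h1
      linarith
    intro m i l
    have := E m i l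
    rw [hscal m, hscal l] at this
    linarith
end

section
/- Let M be a 4-dimensional space-time that is W*-symmetric (∇W* = 0) and obeys Einstein's field equation for a purely electro-magnetic distribution R_{ij} = k T_{ij} with traceless T (so R = −kT = 0). Then the energy-momentum tensor is covariantly constant: ∇_m T_{jk} = 0. -/
/-- A W*-symmetric 4-dimensional space-time obeying Einstein's field
equation for a purely electro-magnetic distribution, `R_{ij} = k T_{ij}` with
traceless T, has covariantly constant energy-momentum tensor: `∇_m T_{jk} = 0`.
`DW`, `DRiem`, `DRic`, `DScal`, `DT` denote the covariant derivatives of W*, the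
Riemann tensor, the Ricci tensor, the scalar curvature and T; `hDW` is the
covariant derivative of the definition of W*, the trace hypotheses express that
contraction commutes with covariant differentiation, `hDEM` and `hDTtrace` are
the covariant derivatives of `R_{ij} = k T_{ij}` and of the tracelessness of T. -/
theorem wstar_symmetric_electromagnetic_T_parallel
    (g ginv Ric T : Fin 4 → Fin 4 → ℝ)
    (DRiem DW : Fin 4 → Fin 4 → Fin 4 → Fin 4 → Fin 4 → ℝ)
    (DRic DT : Fin 4 → Fin 4 → Fin 4 → ℝ)
    (DScal : Fin 4 → ℝ)
    (Scal k : ℝ) (hk : k ≠ 0)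
    (hgsymm : ∀ i j, g i j = g j i)
    (hginvsymm : ∀ i j, ginv i j = ginv j i)
    (hginv : ∀ i j, ∑ t, ginv i t * g t j = if i = j then (1:ℝ) else 0)
    (hDW : ∀ m i j k' l, DW m i j k' l = DRiem m i j k' l -
      (1/3 : ℝ) * (g j k' * DRic m i l - g j l * DRic m i k'))
    (htraceDRiem : ∀ m j k', ∑ i, ∑ l, ginv i l * DRiem m i j k' l = DRic m j k')
    (htraceDRic : ∀ m, ∑ i, ∑ l, ginv i l * DRic m i l = DScal m)
    -- W*-symmetric
    (hWsym : ∀ m i j k' l, DW m i j k' l = 0)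
    -- Einstein's equation for a purely electro-magnetic distribution
    (hEM : ∀ i j, Ric i j = k * T i j)
    (hTtraceless : ∑ i, ∑ j, ginv i j * T i j = 0)
    (hScal : Scal = ∑ i, ∑ j, ginv i j * Ric i j)
    (hDEM : ∀ m i j, DRic m i j = k * DT m i j)
    (hDTtrace : ∀ m, ∑ i, ∑ j, ginv i j * DT m i j = 0) :
    ∀ m j k', DT m j k' = 0 := by
  intro m j k'
  -- DRiem in terms of DRic
  have hDRiem : ∀ i l, DRiem m i j k' l =
      (1/3 : ℝ) * (g j k' * DRic m i l - g j l * DRic m i k') := by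
    intro i l
    have h := hDW m i j k' l
    rw [hWsym] at h
    linarith
  -- DScal vanishes
  have hDScal : DScal m = 0 := by
    rw [← htraceDRic m]
    calc ∑ i, ∑ l, ginv i l * DRic m i l
        = ∑ i, ∑ l, k * (ginv i l * DT m i l) := by
          refine Finset.sum_congr rfl fun i _ => Finset.sum_congr rfl fun l _ => ?_
          rw [hDEM]; ring
      _ = k * ∑ i, ∑ l, ginv i l * DT m i l := by
          rw [Finset.mul_sum]
          exact Finset.sum_congr rfl fun i _ => (Finset.mul_sum _ _ _).symm
      _ = 0 := by rw [hDTtrace m, mul_zero]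
  -- kronecker delta
  have h3 : ∀ i, ∑ l, ginv i l * g j l = if i = j then (1:ℝ) else 0 := by
    intro i
    rw [← hginv i j]
    exact Finset.sum_congr rfl fun l _ => by rw [hgsymm]
  have e3 : ∑ i, (∑ l, ginv i l * g j l) * DRic m i k' = DRic m j k' := by
    simp only [h3, ite_mul, one_mul, zero_mul]
    simp
  have h1 := htraceDRiem m j k'
  simp only [hDRiem] at h1
  have e2 : ∑ i, ∑ l, ginv i l *
        ((1/3 : ℝ) * (g j k' * DRic m i l - g j l * DRic m i k'))
      = (1/3 : ℝ) * g j k' * (∑ i, ∑ l, ginv i l * DRic m i l)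
        - (1/3 : ℝ) * (∑ i, (∑ l, ginv i l * g j l) * DRic m i k') := by
    simp only [Finset.mul_sum, Finset.sum_mul]
    rw [← Finset.sum_sub_distrib]
    refine Finset.sum_congr rfl fun i _ => ?_
    rw [← Finset.sum_sub_distrib]
    exact Finset.sum_congr rfl fun l _ => by ring
  rw [e2, htraceDRic m, hDScal, e3] at h1
  have hDRic0 : DRic m j k' = 0 := by linarith
  have := hDEM m j k'
  rw [hDRic0] at this
  exact (mul_eq_zero.mp this.symm).resolve_left hk
end

section
/- A W*-flat 4-dimensional space-time (W*_{ijkl} = 0) is Einstein with R_{jk} = (R/4)g_{jk}, and its Riemann tensor is given by R_{ijkl} = (R/12)(g_{jk}g_{il} − g_{jl}g_{ik}); in particular M has constant sectional curvature. -/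
/-- A W*-flat 4-dimensional space-time is Einstein,
`R_{jk} = (R/4) g_{jk}`, and its Riemann tensor is
`R_{ijkl} = (R/12)(g_{jk} g_{il} − g_{jl} g_{ik})`, i.e. M has constant curvature. -/
theorem wstar_flat_einstein_constant_curvature
    (g ginv Ric : Fin 4 → Fin 4 → ℝ)
    (Riem Wstar : Fin 4 → Fin 4 → Fin 4 → Fin 4 → ℝ)
    (Scal : ℝ)
    (hgsymm : ∀ i j, g i j = g j i)
    (hginvsymm : ∀ i j, ginv i j = ginv j i)
    (hginv : ∀ i j, ∑ t, ginv i t * g t j = if i = j then (1:ℝ) else 0)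
    (hRic : ∀ j k, Ric j k = ∑ i, ∑ l, ginv i l * Riem i j k l)
    (hScal : Scal = ∑ i, ∑ j, ginv i j * Ric i j)
    (hW : ∀ i j k l, Wstar i j k l =
      Riem i j k l - (1/3 : ℝ) * (g j k * Ric i l - g j l * Ric i k))
    (hflat : ∀ i j k l, Wstar i j k l = 0) :
    (∀ j k, Ric j k = (Scal / 4) * g j k) ∧
    (∀ i j k l, Riem i j k l = (Scal / 12) * (g j k * g i l - g j l * g i k)) := by
  have hR : ∀ i j k l, Riem i j k l = (1/3 : ℝ) * (g j k * Ric i l - g j l * Ric i k) := by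
    intro i j k l
    have h := hflat i j k l
    rw [hW] at h
    linarith
  have hsum2 : ∀ j k, (∑ i, ∑ l, ginv i l * g j l * Ric i k) = Ric j k := by
    intro j k
    have hinner : ∀ i : Fin 4, (∑ l, ginv i l * g j l) = if i = j then (1:ℝ) else 0 := by
      intro i
      rw [← hginv i j]
      exact Finset.sum_congr rfl fun l _ => by rw [hgsymm]
    calc (∑ i, ∑ l, ginv i l * g j l * Ric i k)
        = ∑ i, (∑ l, ginv i l * g j l) * Ric i k := by
          exact Finset.sum_congr rfl fun i _ => by rw [Finset.sum_mul]
      _ = ∑ i, (if i = j then (1:ℝ) else 0) * Ric i k := by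
          exact Finset.sum_congr rfl fun i _ => by rw [hinner]
      _ = Ric j k := by simp
  have key : ∀ j k, Ric j k = (Scal / 4) * g j k := by
    intro j k
    have e := hRic j k
    have e2 : (∑ i, ∑ l, ginv i l * Riem i j k l)
        = (1/3 : ℝ) * g j k * (∑ i, ∑ l, ginv i l * Ric i l)
          - (1/3 : ℝ) * (∑ i, ∑ l, ginv i l * g j l * Ric i k) := by
      calc (∑ i, ∑ l, ginv i l * Riem i j k l)
          = ∑ i, ∑ l, ((1/3 : ℝ) * g j k * (ginv i l * Ric i l)
              - (1/3 : ℝ) * (ginv i l * g j l * Ric i k)) := by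
            refine Finset.sum_congr rfl fun i _ => Finset.sum_congr rfl fun l _ => ?_
            rw [hR]; ring
        _ = (1/3 : ℝ) * g j k * (∑ i, ∑ l, ginv i l * Ric i l)
            - (1/3 : ℝ) * (∑ i, ∑ l, ginv i l * g j l * Ric i k) := by
            simp [Finset.sum_sub_distrib, Finset.mul_sum]
    rw [e2, hsum2, ← hScal] at e
    linarith
  refine ⟨key, fun i j k l => ?_⟩
  rw [hR, key, key]
  ring
end

section
/- Let M be a W*-flat 4-dimensional space-time obeying Einstein's field equation with constants Λ and k ≠ 0. Then the energy-momentum tensor is covariantly constant: ∇_l T_{ij} = 0. -/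
/-- On a W*-flat 4-dimensional space-time obeying Einstein's field
equation (Λ, k constants, k ≠ 0), the energy-momentum tensor is covariantly
constant: `∇_l T_{ij} = 0`.
`DW`, `DRiem`, `DRic`, `DScal`, `DT` are the covariant derivatives of W*, the
Riemann tensor, the Ricci tensor, the scalar curvature and T; `hDW` is the
covariant derivative of the definition of W*, `hDWzero` says the covariant
derivative of the vanishing tensor W* vanishes, the trace hypotheses express
commutation of contraction with covariant differentiation, `hdivRic` is the
contracted Bianchi identity, and `hDT` is the covariant derivative of Einstein's
field equation. -/
theorem wstar_flat_T_parallel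
    (g ginv Ric T : Fin 4 → Fin 4 → ℝ)
    (Riem Wstar : Fin 4 → Fin 4 → Fin 4 → Fin 4 → ℝ)
    (DRiem DW : Fin 4 → Fin 4 → Fin 4 → Fin 4 → Fin 4 → ℝ)
    (DRic DT : Fin 4 → Fin 4 → Fin 4 → ℝ)
    (DScal : Fin 4 → ℝ)
    (Scal Λ k : ℝ) (hk : k ≠ 0)
    (hgsymm : ∀ i j, g i j = g j i)
    (hginvsymm : ∀ i j, ginv i j = ginv j i)
    (hginv : ∀ i j, ∑ t, ginv i t * g t j = if i = j then (1:ℝ) else 0)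
    (hW : ∀ i j k' l, Wstar i j k' l =
      Riem i j k' l - (1/3 : ℝ) * (g j k' * Ric i l - g j l * Ric i k'))
    (hflat : ∀ i j k' l, Wstar i j k' l = 0)
    (hEFE : ∀ i j, Ric i j - (Scal / 2) * g i j + Λ * g i j = k * T i j)
    (hDW : ∀ m i j k' l, DW m i j k' l = DRiem m i j k' l -
      (1/3 : ℝ) * (g j k' * DRic m i l - g j l * DRic m i k'))
    (hDWzero : ∀ m i j k' l, DW m i j k' l = 0)
    (htraceDRiem : ∀ m j k', ∑ i, ∑ l, ginv i l * DRiem m i j k' l = DRic m j k')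
    (htraceDRic : ∀ m, ∑ i, ∑ l, ginv i l * DRic m i l = DScal m)
    (hdivRic : ∀ l, ∑ j, ∑ k', ginv j k' * DRic k' j l = (1/2 : ℝ) * DScal l)
    (hDT : ∀ l i j, k * DT l i j = DRic l i j - (1/2 : ℝ) * g i j * DScal l) :
    ∀ l i j, DT l i j = 0 := by

  -- Step 0: DRiem in terms of DRic
  have hRiem : ∀ m i j k' l, DRiem m i j k' l =
      (1/3 : ℝ) * (g j k' * DRic m i l - g j l * DRic m i k') := by
    intro m i j k' l
    have h := hDW m i j k' l
    rw [hDWzero] at h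
    linarith
  -- Step 1: DRic m j k' = (1/4) * g j k' * DScal m
  have hDRic : ∀ m j k', DRic m j k' = (1/4 : ℝ) * g j k' * DScal m := by
    intro m j k'
    have h1 := htraceDRiem m j k'
    have hterm2 : (∑ i, ∑ l, ginv i l * (g j l * DRic m i k')) = DRic m j k' := by
      have hinner : ∀ i : Fin 4, (∑ l, ginv i l * (g j l * DRic m i k'))
          = (if i = j then (1:ℝ) else 0) * DRic m i k' := by
        intro i
        calc (∑ l, ginv i l * (g j l * DRic m i k'))
            = (∑ l, ginv i l * g l j) * DRic m i k' := by
              rw [Finset.sum_mul]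
              refine Finset.sum_congr rfl ?_
              intro l _
              rw [hgsymm j l]; ring
          _ = _ := by rw [hginv]
      simp only [hinner, ite_mul, one_mul, zero_mul]
      simp
    have hterm1 : (∑ i, ∑ l, ginv i l * (g j k' * DRic m i l)) = g j k' * DScal m := by
      rw [← htraceDRic m, Finset.mul_sum]
      refine Finset.sum_congr rfl ?_
      intro i _
      rw [Finset.mul_sum]
      refine Finset.sum_congr rfl ?_
      intro l _
      ring
    have h2 : (∑ i, ∑ l, ginv i l * DRiem m i j k' l)
        = (1/3 : ℝ) * ((∑ i, ∑ l, ginv i l * (g j k' * DRic m i l))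
            - (∑ i, ∑ l, ginv i l * (g j l * DRic m i k'))) := by
      simp only [hRiem, Finset.mul_sum, ← Finset.sum_sub_distrib]
      refine Finset.sum_congr rfl fun i _ => ?_
      refine Finset.sum_congr rfl fun l _ => ?_
      ring
    rw [h2, hterm1, hterm2] at h1
    linarith
  -- Step 2: DScal = 0
  have hDScal : ∀ l, DScal l = 0 := by
    intro l
    have h1 := hdivRic l
    have h2 : (∑ j, ∑ k', ginv j k' * DRic k' j l) = (1/4 : ℝ) * DScal l := by
      calc (∑ j, ∑ k', ginv j k' * DRic k' j l)
          = ∑ k', ∑ j, ginv j k' * DRic k' j l := Finset.sum_comm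
        _ = ∑ k', (1/4 : ℝ) * DScal k' * (∑ j, ginv k' j * g j l) := by
            refine Finset.sum_congr rfl ?_
            intro k' _
            rw [Finset.mul_sum]
            refine Finset.sum_congr rfl ?_
            intro j _
            rw [hDRic, hginvsymm j k']; ring
        _ = ∑ k', (1/4 : ℝ) * DScal k' * (if k' = l then (1:ℝ) else 0) := by
            refine Finset.sum_congr rfl ?_
            intro k' _
            rw [hginv]
        _ = (1/4 : ℝ) * DScal l := by simp
    rw [h2] at h1
    linarith
  intro l i j
  have h := hDT l i j
  rw [hDRic, hDScal] at h
  have : k * DT l i j = 0 := by rw [h]; ring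
  exact (mul_eq_zero.mp this).resolve_left hk
end

section
/- Let M be a 4-dimensional space-time whose W*-curvature tensor, regarded as a (1,3)-tensor W*^i_{klm}, has all three traces zero: W*^t_{tml} = W*^t_{mtl} = W*^t_{lmt} = 0. Then M is Einstein: R_{ml} = (R/4)g_{ml}. -/
/-- If the W*-curvature tensor of a 4-dimensional space-time,
regarded as a (1,3)-tensor `W*^i_{klm} = g^{ij} W*_{jklm}`, has all three traces
zero, `W*^t_{tml} = W*^t_{mtl} = W*^t_{lmt} = 0`, then the space-time is
Einstein: `R_{ml} = (R/4) g_{ml}`. -/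
theorem wstar_traceless_einstein
    (g ginv Ric : Fin 4 → Fin 4 → ℝ)
    (Riem Wstar : Fin 4 → Fin 4 → Fin 4 → Fin 4 → ℝ)
    (W13 : Fin 4 → Fin 4 → Fin 4 → Fin 4 → ℝ)
    (Scal : ℝ)
    (hgsymm : ∀ i j, g i j = g j i)
    (hginvsymm : ∀ i j, ginv i j = ginv j i)
    (hginv : ∀ i j, ∑ t, ginv i t * g t j = if i = j then (1:ℝ) else 0)
    (hR1 : ∀ i j k l, Riem i j k l = - Riem j i k l)
    (hR2 : ∀ i j k l, Riem i j k l = - Riem i j l k)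
    (hR3 : ∀ i j k l, Riem i j k l = Riem k l i j)
    (hRic : ∀ i j, Ric i j = ∑ k, ∑ l, ginv k l * Riem k i j l)
    (hRicSym : ∀ i j, Ric i j = Ric j i)
    (hScal : Scal = ∑ i, ∑ j, ginv i j * Ric i j)
    (hW : ∀ j k l m, Wstar j k l m =
      Riem j k l m - (1/3 : ℝ) * (g k l * Ric j m - g k m * Ric j l))
    (hW13 : ∀ i k l m, W13 i k l m = ∑ j, ginv i j * Wstar j k l m)
    (htrace1 : ∀ m l, ∑ t, W13 t t m l = 0)
    (htrace2 : ∀ m l, ∑ t, W13 t m t l = 0)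
    (htrace3 : ∀ m l, ∑ t, W13 t l m t = 0) :
    ∀ m l, Ric m l = (Scal / 4) * g m l := by
  intro m l
  have e1 : ∑ t : Fin 4, ∑ j : Fin 4, ginv t j * Riem j m t l = -Ric m l := by
    rw [hRic m l, Finset.sum_comm, ← Finset.sum_neg_distrib]
    refine Finset.sum_congr rfl fun j _ => ?_
    rw [← Finset.sum_neg_distrib]
    refine Finset.sum_congr rfl fun t _ => ?_
    rw [hginvsymm t j, hR2 j m t l]; ring
  have e2 : ∑ t : Fin 4, ∑ j : Fin 4, ginv t j * (g m t * Ric j l) = Ric m l := by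
    rw [Finset.sum_comm]
    have inner : ∀ j : Fin 4, ∑ t : Fin 4, ginv t j * (g m t * Ric j l)
        = (if j = m then (1:ℝ) else 0) * Ric j l := by
      intro j
      rw [← hginv j m, Finset.sum_mul]
      refine Finset.sum_congr rfl fun t _ => ?_
      rw [hginvsymm t j, hgsymm m t]; ring
    simp [inner]
  have e3 : ∑ t : Fin 4, ∑ j : Fin 4, ginv t j * (g m l * Ric j t) = g m l * Scal := by
    rw [hScal, Finset.mul_sum, Finset.sum_comm]
    refine Finset.sum_congr rfl fun j _ => ?_
    rw [Finset.mul_sum]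
    refine Finset.sum_congr rfl fun t _ => ?_
    rw [hginvsymm t j]; ring
  have h2 : (∑ t : Fin 4, ∑ j : Fin 4, ginv t j * Riem j m t l)
      - (1/3 : ℝ) * (∑ t : Fin 4, ∑ j : Fin 4, ginv t j * (g m t * Ric j l))
      + (1/3 : ℝ) * (∑ t : Fin 4, ∑ j : Fin 4, ginv t j * (g m l * Ric j t)) = 0 := by
    have h := htrace2 m l
    simp only [hW13] at h
    calc (∑ t : Fin 4, ∑ j : Fin 4, ginv t j * Riem j m t l)
        - (1/3 : ℝ) * (∑ t : Fin 4, ∑ j : Fin 4, ginv t j * (g m t * Ric j l))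
        + (1/3 : ℝ) * (∑ t : Fin 4, ∑ j : Fin 4, ginv t j * (g m l * Ric j t))
        = ∑ t : Fin 4, ∑ j : Fin 4, (ginv t j * Riem j m t l
            - (1/3 : ℝ) * (ginv t j * (g m t * Ric j l))
            + (1/3 : ℝ) * (ginv t j * (g m l * Ric j t))) := by
          simp [Finset.sum_add_distrib, Finset.sum_sub_distrib, Finset.mul_sum]
      _ = ∑ t : Fin 4, ∑ j : Fin 4, ginv t j * Wstar j m t l := by
          refine Finset.sum_congr rfl fun t _ => Finset.sum_congr rfl fun j _ => ?_
          rw [hW]; ring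
      _ = 0 := h
  rw [e1, e2, e3] at h2
  linarith
end

section
/- Let M be a perfect fluid W*-flat 4-dimensional space-time obeying Einstein's field equation with k ≠ 0, with energy-momentum tensor T_{ij} = (μ + p)u_i u_j + p g_{ij}, u_i u^i = −1. Then μ + p = 0, μ and p are constants, T_{ij} = p g_{ij}, and ∇_l T_{ij} = 0. -/
lemma contract_helper (ginv : Fin 4 → Fin 4 → ℝ) (gj : Fin 4 → ℝ) (j : Fin 4)
    (B : Fin 4 → Fin 4 → ℝ) (C : Fin 4 → ℝ) (A S : ℝ)
    (hS : (∑ i, ∑ l, ginv i l * B i l) = S)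
    (hd : ∀ i, (∑ l, ginv i l * gj l) = if i = j then (1:ℝ) else 0) :
    (∑ i, ∑ l, ginv i l * ((1/3:ℝ) * (A * B i l - gj l * C i)))
      = (1/3:ℝ) * (A * S - C j) := by
  have h1 : ∀ i, (∑ l, ginv i l * ((1/3:ℝ) * (A * B i l - gj l * C i)))
      = (1/3:ℝ) * A * (∑ l, ginv i l * B i l)
        - (1/3:ℝ) * C i * (∑ l, ginv i l * gj l) := by
    intro i
    rw [Finset.mul_sum, Finset.mul_sum, ← Finset.sum_sub_distrib]
    exact Finset.sum_congr rfl fun l _ => by ring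
  simp_rw [h1, hd, Finset.sum_sub_distrib, ← Finset.mul_sum, hS]
  simp [mul_ite, Finset.sum_ite_eq']
  ring


/-- A perfect fluid W*-flat 4-dimensional space-time obeying
Einstein's field equation (k ≠ 0), with `T_{ij} = (μ+p)u_i u_j + p g_{ij}` and
`u_i u^i = −1`, satisfies `μ + p = 0`, μ and p are constants, `T_{ij} = p g_{ij}`
and `∇_l T_{ij} = 0`.
All tensors are component functions over the space-time M; the covariant
derivative hypotheses are as in the W*-flat case (`hDW`, `hDWzero`, trace
hypotheses, contracted Bianchi identity, covariant derivative of the field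
equation), and `hconst` expresses that a function with vanishing covariant
derivative on the (connected) space-time is constant. -/
theorem perfect_fluid_wstar_flat {M : Type*}
    (g ginv Ric T : M → Fin 4 → Fin 4 → ℝ)
    (u : M → Fin 4 → ℝ)
    (Riem Wstar : M → Fin 4 → Fin 4 → Fin 4 → Fin 4 → ℝ)
    (DRiem DW : M → Fin 4 → Fin 4 → Fin 4 → Fin 4 → Fin 4 → ℝ)
    (DRic DT : M → Fin 4 → Fin 4 → Fin 4 → ℝ)
    (DScal : M → Fin 4 → ℝ)
    (Scal μ p : M → ℝ) (Λ k : ℝ) (hk : k ≠ 0)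
    (hgsymm : ∀ x i j, g x i j = g x j i)
    (hginvsymm : ∀ x i j, ginv x i j = ginv x j i)
    (hginv : ∀ x i j, ∑ t, ginv x i t * g x t j = if i = j then (1:ℝ) else 0)
    (hRic : ∀ x j k', Ric x j k' = ∑ i, ∑ l, ginv x i l * Riem x i j k' l)
    (hScal : ∀ x, Scal x = ∑ i, ∑ j, ginv x i j * Ric x i j)
    (hW : ∀ x i j k' l, Wstar x i j k' l =
      Riem x i j k' l - (1/3 : ℝ) * (g x j k' * Ric x i l - g x j l * Ric x i k'))
    (hflat : ∀ x i j k' l, Wstar x i j k' l = 0)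
    (hEFE : ∀ x i j,
      Ric x i j - (Scal x / 2) * g x i j + Λ * g x i j = k * T x i j)
    -- perfect fluid energy-momentum tensor with unit timelike velocity u
    (hT : ∀ x i j, T x i j = (μ x + p x) * u x i * u x j + p x * g x i j)
    (huu : ∀ x, ∑ i, ∑ j, ginv x i j * u x i * u x j = -1)
    -- covariant derivative structure
    (hDW : ∀ x m i j k' l, DW x m i j k' l = DRiem x m i j k' l -
      (1/3 : ℝ) * (g x j k' * DRic x m i l - g x j l * DRic x m i k'))
    (hDWzero : ∀ x m i j k' l, DW x m i j k' l = 0)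
    (htraceDRiem : ∀ x m j k',
      ∑ i, ∑ l, ginv x i l * DRiem x m i j k' l = DRic x m j k')
    (htraceDRic : ∀ x m, ∑ i, ∑ l, ginv x i l * DRic x m i l = DScal x m)
    (hdivRic : ∀ x l,
      ∑ j, ∑ k', ginv x j k' * DRic x k' j l = (1/2 : ℝ) * DScal x l)
    (hDT : ∀ x l i j,
      k * DT x l i j = DRic x l i j - (1/2 : ℝ) * g x i j * DScal x l)
    (hconst : (∀ x m, DScal x m = 0) → ∀ x y, Scal x = Scal y) :
    (∀ x, μ x + p x = 0) ∧
    (∀ x y, μ x = μ y) ∧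
    (∀ x y, p x = p y) ∧
    (∀ x i j, T x i j = p x * g x i j) ∧
    (∀ x l i j, DT x l i j = 0) := by
  classical
  -- delta contractions of g with ginv
  have hdelta1 : ∀ (x : M) i j, (∑ l, ginv x i l * g x j l) = if i = j then (1:ℝ) else 0 := by
    intro x i j
    rw [← hginv x i j]
    exact Finset.sum_congr rfl fun l _ => by rw [hgsymm x j l]
  have hdelta2 : ∀ (x : M) a j, (∑ i, ginv x i a * g x i j) = if a = j then (1:ℝ) else 0 := by
    intro x a j
    rw [← hginv x a j]
    exact Finset.sum_congr rfl fun i _ => by rw [hginvsymm x i a]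
  -- Ric = (1/4) Scal g
  have hRicEq : ∀ (x : M) j k', Ric x j k' = (1/4:ℝ) * Scal x * g x j k' := by
    intro x j k'
    have h1 : ∀ i l, Riem x i j k' l
        = (1/3 : ℝ) * (g x j k' * Ric x i l - g x j l * Ric x i k') := by
      intro i l
      have h := hflat x i j k' l
      rw [hW] at h
      linarith
    have hsum : (∑ i, ∑ l, ginv x i l * Riem x i j k' l)
        = (1/3:ℝ) * (g x j k' * Scal x - Ric x j k') := by
      rw [show (∑ i, ∑ l, ginv x i l * Riem x i j k' l)
          = ∑ i, ∑ l, ginv x i l *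
            ((1/3:ℝ) * (g x j k' * Ric x i l - g x j l * Ric x i k')) from
        Finset.sum_congr rfl fun i _ => Finset.sum_congr rfl fun l _ => by rw [h1 i l]]
      exact contract_helper (ginv x) (g x j) j (Ric x) (fun i => Ric x i k')
        (g x j k') (Scal x) (hScal x).symm (fun i => hdelta1 x i j)
    have h2 : Ric x j k' = (1/3:ℝ) * (g x j k' * Scal x - Ric x j k') :=
      (hRic x j k').trans hsum
    linarith
  -- DRic = (1/4) DScal g
  have hDRicEq : ∀ (x : M) m j k', DRic x m j k' = (1/4:ℝ) * DScal x m * g x j k' := by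
    intro x m j k'
    have h1 : ∀ i l, DRiem x m i j k' l
        = (1/3 : ℝ) * (g x j k' * DRic x m i l - g x j l * DRic x m i k') := by
      intro i l
      have h := hDWzero x m i j k' l
      rw [hDW] at h
      linarith
    have hsum : (∑ i, ∑ l, ginv x i l * DRiem x m i j k' l)
        = (1/3:ℝ) * (g x j k' * DScal x m - DRic x m j k') := by
      rw [show (∑ i, ∑ l, ginv x i l * DRiem x m i j k' l)
          = ∑ i, ∑ l, ginv x i l *
            ((1/3:ℝ) * (g x j k' * DRic x m i l - g x j l * DRic x m i k')) from
        Finset.sum_congr rfl fun i _ => Finset.sum_congr rfl fun l _ => by rw [h1 i l]]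
      exact contract_helper (ginv x) (g x j) j (DRic x m) (fun i => DRic x m i k')
        (g x j k') (DScal x m) (htraceDRic x m) (fun i => hdelta1 x i j)
    have h2 : DRic x m j k' = (1/3:ℝ) * (g x j k' * DScal x m - DRic x m j k') :=
      (htraceDRiem x m j k').symm.trans hsum
    linarith
  -- DScal = 0
  have hDScal0 : ∀ (x : M) l, DScal x l = 0 := by
    intro x l
    have h := hdivRic x l
    have h2 : (∑ j, ∑ k', ginv x j k' * DRic x k' j l) = (1/4:ℝ) * DScal x l := by
      rw [show (∑ j, ∑ k', ginv x j k' * DRic x k' j l)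
          = ∑ j, ∑ k', (1/4:ℝ) * (DScal x k' * (ginv x j k' * g x j l)) from
        Finset.sum_congr rfl fun j _ => Finset.sum_congr rfl fun k' _ => by
          rw [hDRicEq x k' j l]; ring]
      rw [Finset.sum_comm]
      simp_rw [← Finset.mul_sum, hdelta2 x _ l]
      simp [mul_ite, Finset.sum_ite_eq']
    rw [h2] at h
    linarith
  -- DRic = 0, DT = 0
  have hDRic0 : ∀ (x : M) m j k', DRic x m j k' = 0 := by
    intro x m j k'; rw [hDRicEq, hDScal0]; ring
  have hDT0 : ∀ (x : M) l i j, DT x l i j = 0 := by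
    intro x l i j
    have h := hDT x l i j
    rw [hDRic0, hDScal0] at h
    have h0 : k * DT x l i j = 0 := by linarith
    exact (mul_eq_zero.1 h0).resolve_left hk
  -- Scal constant
  have hScalConst : ∀ x y, Scal x = Scal y := hconst hDScal0
  -- k T = q g where q x = Λ - Scal x / 4
  have hkT : ∀ (x : M) i j, k * T x i j = (Λ - Scal x / 4) * g x i j := by
    intro x i j
    have h := hEFE x i j
    rw [hRicEq] at h
    linarith
  -- trace of g : Σ ginv g = 4
  have htrg : ∀ x : M, (∑ i, ∑ j, ginv x i j * g x i j) = 4 := by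
    intro x
    have : ∀ i : Fin 4, (∑ j, ginv x i j * g x i j) = 1 := by
      intro i
      have := hdelta1 x i i
      simpa using this
    simp [this]
  -- pointwise facts at each x
  have main : ∀ x : M, k * p x = Λ - Scal x / 4 ∧ μ x + p x = 0 := by
    intro x
    set q := Λ - Scal x / 4 with hq
    -- contraction A
    have hA : k * (μ x + p x) * (-1) + k * p x * 4 = q * 4 := by
      have e1 : (∑ i, ∑ j, ginv x i j * (k * T x i j))
          = k * (μ x + p x) * (∑ i, ∑ j, ginv x i j * u x i * u x j)
            + k * p x * (∑ i, ∑ j, ginv x i j * g x i j) := by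
        simp_rw [hT, Finset.mul_sum]
        rw [← Finset.sum_add_distrib]
        refine Finset.sum_congr rfl fun i _ => ?_
        rw [← Finset.sum_add_distrib]
        exact Finset.sum_congr rfl fun j _ => by ring
      have e2 : (∑ i, ∑ j, ginv x i j * (k * T x i j))
          = q * (∑ i, ∑ j, ginv x i j * g x i j) := by
        simp_rw [hkT, Finset.mul_sum]
        exact Finset.sum_congr rfl fun i _ => Finset.sum_congr rfl fun j _ => by ring
      rw [e1, huu, htrg] at e2
      linarith
    -- contraction B with v
    set v : Fin 4 → ℝ := fun i => ∑ a, ginv x i a * u x a with hv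
    have hvu : (∑ i, v i * u x i) = -1 := by
      rw [← huu x]
      refine Finset.sum_congr rfl fun i _ => ?_
      rw [hv, Finset.sum_mul]
      exact Finset.sum_congr rfl fun a _ => by ring
    have hvg : ∀ j, (∑ i, v i * g x i j) = u x j := by
      intro j
      rw [show (∑ i, v i * g x i j) = ∑ a, u x a * (∑ i, ginv x i a * g x i j) by
        simp_rw [hv, Finset.sum_mul, Finset.mul_sum]
        rw [Finset.sum_comm]
        exact Finset.sum_congr rfl fun i _ => Finset.sum_congr rfl fun a _ => by ring]
      simp_rw [hdelta2 x _ j]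
      simp [mul_ite, Finset.sum_ite_eq']
    have hvv : (∑ i, ∑ j, v i * v j * g x i j) = -1 := by
      rw [show (∑ i, ∑ j, v i * v j * g x i j) = ∑ j, v j * (∑ i, v i * g x i j) by
        rw [Finset.sum_comm]
        exact Finset.sum_congr rfl fun j _ => by
          rw [Finset.mul_sum]
          exact Finset.sum_congr rfl fun i _ => by ring]
      simp_rw [hvg]
      exact hvu
    have hB : k * (μ x + p x) * 1 + k * p x * (-1) = q * (-1) := by
      have e1 : (∑ i, ∑ j, v i * v j * (k * T x i j))
          = k * (μ x + p x) * ((∑ i, v i * u x i) * (∑ j, v j * u x j))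
            + k * p x * (∑ i, ∑ j, v i * v j * g x i j) := by
        rw [Finset.sum_mul_sum, Finset.mul_sum, Finset.mul_sum]
        simp_rw [Finset.mul_sum]
        rw [← Finset.sum_add_distrib]
        refine Finset.sum_congr rfl fun i _ => ?_
        rw [← Finset.sum_add_distrib]
        refine Finset.sum_congr rfl fun j _ => ?_
        rw [hT]; ring
      have e2 : (∑ i, ∑ j, v i * v j * (k * T x i j))
          = q * (∑ i, ∑ j, v i * v j * g x i j) := by
        simp_rw [hkT, Finset.mul_sum]
        exact Finset.sum_congr rfl fun i _ => Finset.sum_congr rfl fun j _ => by ring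
      rw [e1, hvu, hvv] at e2
      norm_num at e2 ⊢
      linarith
    constructor
    · linarith
    · have hmup : k * (μ x + p x) = 0 := by linarith
      rcases mul_eq_zero.1 hmup with h | h
      · exact absurd h hk
      · exact h
  refine ⟨fun x => (main x).2, ?_, ?_, ?_, hDT0⟩
  · intro x y
    have hx := main x; have hy := main y
    have hs := hScalConst x y
    have : k * p x = k * p y := by rw [hx.1, hy.1, hs]
    have hp : p x = p y := by
      field_simp at this; tauto
    linarith [hx.2, hy.2, hp]
  · intro x y
    have hx := main x; have hy := main y
    have hs := hScalConst x y
    have : k * p x = k * p y := by rw [hx.1, hy.1, hs]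
    field_simp at this; tauto
  · intro x i j
    rw [hT]
    have := (main x).2
    rw [show μ x + p x = 0 from this]
    ring
end

section
/- Let M be a dust fluid W*-flat 4-dimensional space-time obeying Einstein's field equation with k ≠ 0, i.e., T_{ij} = μ u_i u_j with u_i u^i = −1. Then T_{ij} = 0, i.e., M is a vacuum space-time. -/
/-- A dust fluid W*-flat 4-dimensional space-time obeying
Einstein's field equation (k ≠ 0), i.e. with `T_{ij} = μ u_i u_j` and
`u_i u^i = −1`, is a vacuum space-time: `T_{ij} = 0`. -/
theorem dust_wstar_flat_vacuum
    (g ginv Ric T : Fin 4 → Fin 4 → ℝ)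
    (u : Fin 4 → ℝ)
    (Riem Wstar : Fin 4 → Fin 4 → Fin 4 → Fin 4 → ℝ)
    (Scal μ Λ k : ℝ) (hk : k ≠ 0)
    (hgsymm : ∀ i j, g i j = g j i)
    (hginvsymm : ∀ i j, ginv i j = ginv j i)
    (hginv : ∀ i j, ∑ t, ginv i t * g t j = if i = j then (1:ℝ) else 0)
    (hRic : ∀ j k', Ric j k' = ∑ i, ∑ l, ginv i l * Riem i j k' l)
    (hScal : Scal = ∑ i, ∑ j, ginv i j * Ric i j)
    (hW : ∀ i j k' l, Wstar i j k' l =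
      Riem i j k' l - (1/3 : ℝ) * (g j k' * Ric i l - g j l * Ric i k'))
    (hflat : ∀ i j k' l, Wstar i j k' l = 0)
    (hEFE : ∀ i j, Ric i j - (Scal / 2) * g i j + Λ * g i j = k * T i j)
    -- dust fluid energy-momentum tensor with unit timelike velocity u
    (hT : ∀ i j, T i j = μ * u i * u j)
    (huu : ∑ i, ∑ j, ginv i j * u i * u j = -1) :
    ∀ i j, T i j = 0 := by
  -- Riemann tensor in terms of Ricci from W*-flatness
  have hRiem : ∀ i j k' l, Riem i j k' l
      = (1/3 : ℝ) * (g j k' * Ric i l - g j l * Ric i k') := by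
    intro i j k' l
    have h := hflat i j k' l
    rw [hW] at h
    linarith
  -- Step 1: Einstein space: 4 Ric = Scal g
  have hEinstein : ∀ j k', (4:ℝ) * Ric j k' = Scal * g j k' := by
    intro j k'
    have h1 : Ric j k' = ∑ i, ∑ l, ginv i l *
        ((1/3 : ℝ) * (g j k' * Ric i l - g j l * Ric i k')) := by
      rw [hRic]
      exact Finset.sum_congr rfl fun i _ => Finset.sum_congr rfl fun l _ => by
        rw [hRiem]
    have hA : ∑ i, ∑ l, ginv i l * (g j k' * Ric i l) = g j k' * Scal := by
      rw [hScal, Finset.mul_sum]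
      exact Finset.sum_congr rfl fun i _ => by
        rw [Finset.mul_sum]
        exact Finset.sum_congr rfl fun l _ => by ring
    have hB : ∑ i : Fin 4, ∑ l, ginv i l * (g j l * Ric i k') = Ric j k' := by
      have hinner : ∀ i : Fin 4, ∑ l, ginv i l * (g j l * Ric i k')
          = (if i = j then (1:ℝ) else 0) * Ric i k' := by
        intro i
        rw [← hginv i j, Finset.sum_mul]
        exact Finset.sum_congr rfl fun l _ => by rw [hgsymm j l]; ring
      rw [Finset.sum_congr rfl fun i _ => hinner i]
      simp
    have h2 : ∑ i, ∑ l, ginv i l *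
        ((1/3 : ℝ) * (g j k' * Ric i l - g j l * Ric i k'))
        = (1/3 : ℝ) * (g j k' * Scal - Ric j k') := by
      rw [← hA, ← hB]
      rw [← Finset.sum_sub_distrib, Finset.mul_sum]
      exact Finset.sum_congr rfl fun i _ => by
        rw [← Finset.sum_sub_distrib, Finset.mul_sum]
        exact Finset.sum_congr rfl fun l _ => by ring
    rw [h2] at h1
    linarith
  -- raised velocity
  set v : Fin 4 → ℝ := fun i => ∑ a, ginv i a * u a with hv
  -- u·v = -1
  have hvu : ∑ i, u i * v i = -1 := by
    rw [← huu]
    exact Finset.sum_congr rfl fun i _ => by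
      rw [hv, Finset.mul_sum]
      exact Finset.sum_congr rfl fun a _ => by ring
  -- lowering v gives back u
  have hwv : ∀ i, ∑ j, g i j * v j = u i := by
    intro i
    have hinner : ∀ j : Fin 4, g i j * v j = ∑ b, g i j * ginv j b * u b := by
      intro j
      rw [hv, Finset.mul_sum]
      exact Finset.sum_congr rfl fun b _ => by ring
    rw [Finset.sum_congr rfl fun j _ => hinner j, Finset.sum_comm]
    have hib : ∀ b : Fin 4, ∑ j, g i j * ginv j b * u b
        = (if b = i then (1:ℝ) else 0) * u b := by
      intro b
      rw [← hginv b i, Finset.sum_mul]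
      exact Finset.sum_congr rfl fun j _ => by
        rw [hgsymm i j, hginvsymm j b]; ring
    rw [Finset.sum_congr rfl fun b _ => hib b]
    simp
  -- the reduced field equation
  have hE2 : ∀ i j, (Λ - Scal/4) * g i j = (k*μ) * (u i * u j) := by
    intro i j
    have h := hEFE i j
    rw [hT i j] at h
    have h2 := hEinstein i j
    linarith
  -- trace of g w.r.t. ginv is 4
  have htr : ∑ i, ∑ j, ginv i j * g i j = 4 := by
    have hrow : ∀ i : Fin 4, ∑ j, ginv i j * g i j = 1 := by
      intro i
      have := hginv i i
      simp at this
      rw [← this]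
      exact Finset.sum_congr rfl fun j _ => by rw [hgsymm i j]
    rw [Finset.sum_congr rfl fun i _ => hrow i]
    simp
  -- contraction 1: 4 (Λ - Scal/4) = -(k μ)
  have hc1 : 4 * (Λ - Scal/4) = -(k*μ) := by
    have e : ∑ i, ∑ j, ginv i j * ((Λ - Scal/4) * g i j)
        = ∑ i, ∑ j, ginv i j * ((k*μ) * (u i * u j)) := by
      exact Finset.sum_congr rfl fun i _ => Finset.sum_congr rfl fun j _ => by
        rw [hE2 i j]
    have eL : ∑ i, ∑ j, ginv i j * ((Λ - Scal/4) * g i j)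
        = (Λ - Scal/4) * (∑ i, ∑ j, ginv i j * g i j) := by
      rw [Finset.mul_sum]
      exact Finset.sum_congr rfl fun i _ => by
        rw [Finset.mul_sum]
        exact Finset.sum_congr rfl fun j _ => by ring
    have eR : ∑ i, ∑ j, ginv i j * ((k*μ) * (u i * u j))
        = (k*μ) * (∑ i, ∑ j, ginv i j * u i * u j) := by
      rw [Finset.mul_sum]
      exact Finset.sum_congr rfl fun i _ => by
        rw [Finset.mul_sum]
        exact Finset.sum_congr rfl fun j _ => by ring
    rw [eL, eR, htr, huu] at e
    linarith
  -- contraction 2: -(Λ - Scal/4) = k μ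
  have hc2 : -(Λ - Scal/4) = k*μ := by
    have e : ∑ i, ∑ j, (v i * v j) * ((Λ - Scal/4) * g i j)
        = ∑ i, ∑ j, (v i * v j) * ((k*μ) * (u i * u j)) := by
      exact Finset.sum_congr rfl fun i _ => Finset.sum_congr rfl fun j _ => by
        rw [hE2 i j]
    have eL : ∑ i, ∑ j, (v i * v j) * ((Λ - Scal/4) * g i j)
        = (Λ - Scal/4) * (∑ i, v i * (∑ j, g i j * v j)) := by
      rw [Finset.mul_sum]
      exact Finset.sum_congr rfl fun i _ => by
        rw [Finset.mul_sum, Finset.mul_sum]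
        exact Finset.sum_congr rfl fun j _ => by ring
    have eR : ∑ i, ∑ j, (v i * v j) * ((k*μ) * (u i * u j))
        = (k*μ) * ((∑ i, u i * v i) * (∑ j, u j * v j)) := by
      rw [Finset.sum_mul_sum, Finset.mul_sum]
      exact Finset.sum_congr rfl fun i _ => by
        rw [Finset.mul_sum]
        exact Finset.sum_congr rfl fun j _ => by ring
    have eL2 : ∑ i, v i * (∑ j, g i j * v j) = -1 := by
      rw [Finset.sum_congr rfl fun i _ => by rw [hwv i]]
      rw [← hvu]
      exact Finset.sum_congr rfl fun i _ => by ring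
    rw [eL, eR, eL2, hvu] at e
    linarith
  -- conclude μ = 0
  have hkμ : k * μ = 0 := by linarith
  have hμ : μ = 0 := by
    rcases mul_eq_zero.mp hkμ with h | h
    · exact absurd h hk
    · exact h
  intro i j
  rw [hT, hμ]
  ring
end

section
/- For a perfect fluid 4-dimensional space-time obeying Einstein's field equation that is W*-flat, contracting (Λ − kp − R/4)g_{ij} = k(μ+p)u_i u_j with g^{ij} gives R = 4Λ + k(μ − 3p), and contracting with u^i u^j gives R = 4(kμ + Λ); together these yield μ + p = 0. -/
/-- For a perfect fluid W*-flat 4-dimensional space-time obeying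
Einstein's field equation, contracting `(Λ − kp − R/4) g_{ij} = k(μ+p) u_i u_j`
with `g^{ij}` gives `R = 4Λ + k(μ − 3p)`, contracting with `u^i u^j` gives
`R = 4(kμ + Λ)`, and together these yield `μ + p = 0`. -/
theorem perfect_fluid_contractions
    (g ginv : Fin 4 → Fin 4 → ℝ)
    (u : Fin 4 → ℝ)
    (Scal μ p Λ k : ℝ) (hk : k ≠ 0)
    (hgsymm : ∀ i j, g i j = g j i)
    (hginvsymm : ∀ i j, ginv i j = ginv j i)
    (hginv : ∀ i j, ∑ t, ginv i t * g t j = if i = j then (1:ℝ) else 0)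
    (huu : ∑ i, ∑ j, ginv i j * u i * u j = -1)
    (hstart : ∀ i j, (Λ - k * p - Scal / 4) * g i j = k * (μ + p) * u i * u j) :
    Scal = 4 * Λ + k * (μ - 3 * p) ∧
    Scal = 4 * (k * μ + Λ) ∧
    μ + p = 0 := by
  -- the raised-index velocity
  set v : Fin 4 → ℝ := fun a => ∑ i, ginv a i * u i with hv_def
  -- its contraction with u is -1
  have hv : ∑ a, u a * v a = -1 := by
    rw [← huu]
    refine Finset.sum_congr rfl fun a _ => ?_
    rw [hv_def]
    simp only [Finset.mul_sum]
    exact Finset.sum_congr rfl fun i _ => by ring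
  -- the starting equation with one index raised
  have hE : ∀ a j, (Λ - k * p - Scal / 4) * (if a = j then (1:ℝ) else 0)
      = k * (μ + p) * v a * u j := by
    intro a j
    calc (Λ - k * p - Scal / 4) * (if a = j then (1:ℝ) else 0)
        = (Λ - k * p - Scal / 4) * ∑ t, ginv a t * g t j := by rw [hginv]
      _ = ∑ t, ginv a t * ((Λ - k * p - Scal / 4) * g t j) := by
          rw [Finset.mul_sum]; exact Finset.sum_congr rfl fun t _ => by ring
      _ = ∑ t, ginv a t * (k * (μ + p) * u t * u j) := by
          exact Finset.sum_congr rfl fun t _ => by rw [hstart]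
      _ = k * (μ + p) * v a * u j := by
          rw [hv_def]
          simp only [Finset.mul_sum, Finset.sum_mul]
          exact Finset.sum_congr rfl fun t _ => by ring
  -- trace: eq A
  have hA : (Λ - k * p - Scal / 4) * 4 = - (k * (μ + p)) := by
    have h1 : ∑ a : Fin 4, (Λ - k * p - Scal / 4) * (if a = a then (1:ℝ) else 0)
        = ∑ a : Fin 4, k * (μ + p) * v a * u a := by
      exact Finset.sum_congr rfl fun a _ => hE a a
    simp only [eq_self_iff_true, if_true, mul_one] at h1
    rw [Finset.sum_const, Finset.card_univ] at h1
    have h2 : ∑ a, k * (μ + p) * v a * u a = k * (μ + p) * ∑ a, u a * v a := by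
      rw [Finset.mul_sum]
      exact Finset.sum_congr rfl fun a _ => by ring
    rw [h2, hv] at h1
    simp at h1
    linarith [h1]
  -- contract with u_a : eq C
  have hC : ∀ j, (Λ - k * p - Scal / 4) * u j = - (k * (μ + p)) * u j := by
    intro j
    have h1 : ∑ a, u a * ((Λ - k * p - Scal / 4) * (if a = j then (1:ℝ) else 0))
        = ∑ a, u a * (k * (μ + p) * v a * u j) := by
      exact Finset.sum_congr rfl fun a _ => by rw [hE]
    have h2 : ∑ a, u a * ((Λ - k * p - Scal / 4) * (if a = j then (1:ℝ) else 0))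
        = (Λ - k * p - Scal / 4) * u j := by
      rw [Finset.sum_eq_single j]
      · simp [mul_comm]
      · intro b _ hb
        simp [if_neg (by exact fun h => hb h)]
      · simp
    have h3 : ∑ a, u a * (k * (μ + p) * v a * u j)
        = k * (μ + p) * u j * ∑ a, u a * v a := by
      rw [Finset.mul_sum]
      exact Finset.sum_congr rfl fun a _ => by ring
    rw [h2, h3, hv] at h1
    linarith [h1]
  -- contract eq C with v_j : eq B
  have hB : - (Λ - k * p - Scal / 4) = k * (μ + p) := by
    have h1 : ∑ j, v j * ((Λ - k * p - Scal / 4) * u j)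
        = ∑ j, v j * (- (k * (μ + p)) * u j) := by
      exact Finset.sum_congr rfl fun j _ => by rw [hC]
    have h2 : ∑ j, v j * ((Λ - k * p - Scal / 4) * u j)
        = (Λ - k * p - Scal / 4) * ∑ a, u a * v a := by
      rw [Finset.mul_sum]; exact Finset.sum_congr rfl fun j _ => by ring
    have h3 : ∑ j, v j * (- (k * (μ + p)) * u j)
        = - (k * (μ + p)) * ∑ a, u a * v a := by
      rw [Finset.mul_sum]; exact Finset.sum_congr rfl fun j _ => by ring
    rw [h2, h3, hv] at h1
    linarith [h1]
  have hAB : k * (μ + p) = 0 := by linarith [hA, hB]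
  have hmp : μ + p = 0 := by
    rcases mul_eq_zero.mp hAB with h | h
    · exact absurd h hk
    · exact h
  refine ⟨by linarith [hA, hAB], by linarith [hB, hAB], hmp⟩
end
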